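/- The 27 states consisting of the 24 states |ψ₁⟩,…,|ψ₂₄⟩ from the Rubik's-cube construction together with the three GHZ states |ψ₂₅⟩ = |000⟩+|111⟩+|222⟩, |ψ₂₆⟩ = |000⟩+ω|111⟩+ω²|222⟩, |ψ₂₇⟩ = |000⟩+ω²|111⟩+ω|222⟩ (ω = e^{2πi/3}) form an orthogonal basis of ℂ³⊗ℂ³⊗ℂ³ (27 pairwise orthogonal nonzero vectors in a 27-dimensional space). -/
import Mathlib


open Finset

/-- standard basis vector `e_a ⊗ e_b ⊗ e_c` of `ℂ³⊗ℂ³⊗ℂ³`. -/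
def ket3 (a b c : Fin 3) : Fin 3 × Fin 3 × Fin 3 → ℂ := fun p => if p = (a, b, c) then 1 else 0

/-- the twelve pairs `(u, v)` of basis vectors of the Rubik's-cube construction. -/
def cubePair : Fin 12 → (Fin 3 × Fin 3 × Fin 3) × (Fin 3 × Fin 3 × Fin 3)
  | 0 => ((1,0,0),(2,0,1))
  | 1 => ((1,0,1),(2,0,0))
  | 2 => ((1,0,2),(2,1,2))
  | 3 => ((1,1,2),(2,0,2))
  | 4 => ((2,1,0),(2,2,1))
  | 5 => ((2,1,1),(2,2,0))
  | 6 => ((0,1,0),(1,2,0))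
  | 7 => ((0,2,0),(1,1,0))
  | 8 => ((0,2,1),(1,2,2))
  | 9 => ((0,2,2),(1,2,1))
  | 10 => ((0,0,1),(0,1,2))
  | 11 => ((0,0,2),(0,1,1))

/-- the 24 states `|ψ_k⟩`: for the pair `m` the two states `|u⟩ ± |v⟩`. -/
def cubeState (m : Fin 12) (ε : Fin 2) : Fin 3 × Fin 3 × Fin 3 → ℂ :=
  ket3 (cubePair m).1.1 (cubePair m).1.2.1 (cubePair m).1.2.2
    + (if ε = 0 then (1 : ℂ) else -1) •
      ket3 (cubePair m).2.1 (cubePair m).2.2.1 (cubePair m).2.2.2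

/-- the GHZ state `|ψ_s⟩ = |000⟩ + ω^s|111⟩ + ω^{2s}|222⟩` with `ω = e^{2πi/3}`. -/
noncomputable def ghz3 (s : Fin 3) : Fin 3 × Fin 3 × Fin 3 → ℂ := fun p =>
  if p.2.1 = p.1 ∧ p.2.2 = p.1 then
    (Complex.exp (2 * Real.pi * Complex.I / 3)) ^ ((p.1 : ℕ) * (s : ℕ)) else 0

/-- the 27 states: the 24 cube states followed by the three GHZ states. -/
noncomputable def basis27 (k : Fin 27) : Fin 3 × Fin 3 × Fin 3 → ℂ :=
  if h : (k : ℕ) < 24 then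
    cubeState ⟨(k : ℕ) / 2, by omega⟩ ⟨(k : ℕ) % 2, by omega⟩
  else
    ghz3 ⟨(k : ℕ) - 24, by omega⟩

lemma inner_delta (x y : Fin 3 × Fin 3 × Fin 3) :
    ∑ p : Fin 3 × Fin 3 × Fin 3,
      (starRingEnd ℂ) (ket3 x.1 x.2.1 x.2.2 p) * ket3 y.1 y.2.1 y.2.2 p
      = if x = y then 1 else 0 := by
  simp only [ket3, Prod.mk.eta, apply_ite (starRingEnd ℂ), map_one, map_zero, ite_mul, one_mul,
    zero_mul]
  rw [Finset.sum_ite_eq' (Finset.univ) x (fun p => if p = y then (1:ℂ) else 0)]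
  simp [eq_comm]

lemma cube_disj : ∀ m m' : Fin 12, m ≠ m' → (cubePair m).1 ≠ (cubePair m').1 ∧
    (cubePair m).1 ≠ (cubePair m').2 ∧ (cubePair m).2 ≠ (cubePair m').1 ∧
    (cubePair m).2 ≠ (cubePair m').2 := by decide

lemma cube_ne : ∀ m : Fin 12, (cubePair m).1 ≠ (cubePair m).2 := by decide

lemma cube_not_diag : ∀ (m : Fin 12) (p : Fin 3 × Fin 3 × Fin 3),
    p.2.1 = p.1 ∧ p.2.2 = p.1 → p ≠ (cubePair m).1 ∧ p ≠ (cubePair m).2 := by decide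

lemma cube_orth (m m' : Fin 12) (ε ε' : Fin 2) (h : m ≠ m' ∨ ε ≠ ε') :
    ∑ p : Fin 3 × Fin 3 × Fin 3,
      (starRingEnd ℂ) (cubeState m ε p) * cubeState m' ε' p = 0 := by
  set c : ℂ := if ε = 0 then 1 else -1 with hc
  set c' : ℂ := if ε' = 0 then 1 else -1 with hc'
  have expand : ∀ p, (starRingEnd ℂ) (cubeState m ε p) * cubeState m' ε' p =
      (starRingEnd ℂ) (ket3 (cubePair m).1.1 (cubePair m).1.2.1 (cubePair m).1.2.2 p) *
        ket3 (cubePair m').1.1 (cubePair m').1.2.1 (cubePair m').1.2.2 p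
      + c' * ((starRingEnd ℂ) (ket3 (cubePair m).1.1 (cubePair m).1.2.1 (cubePair m).1.2.2 p) *
        ket3 (cubePair m').2.1 (cubePair m').2.2.1 (cubePair m').2.2.2 p)
      + (starRingEnd ℂ) c * ((starRingEnd ℂ) (ket3 (cubePair m).2.1 (cubePair m).2.2.1 (cubePair m).2.2.2 p) *
        ket3 (cubePair m').1.1 (cubePair m').1.2.1 (cubePair m').1.2.2 p)
      + (starRingEnd ℂ) c * c' * ((starRingEnd ℂ) (ket3 (cubePair m).2.1 (cubePair m).2.2.1 (cubePair m).2.2.2 p) *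
        ket3 (cubePair m').2.1 (cubePair m').2.2.1 (cubePair m').2.2.2 p) := by
    intro p
    simp only [cubeState, Pi.add_apply, Pi.smul_apply, smul_eq_mul, map_add, map_mul]
    ring
  rw [Finset.sum_congr rfl (fun p _ => expand p)]
  simp only [Finset.sum_add_distrib, ← Finset.mul_sum, inner_delta]
  rcases eq_or_ne m m' with rfl | hm
  · have hε : ε ≠ ε' := by tauto
    rw [if_pos rfl, if_pos rfl, if_neg (cube_ne m), if_neg (Ne.symm (cube_ne m))]
    fin_cases ε <;> fin_cases ε' <;> simp_all
  · obtain ⟨h1, h2, h3, h4⟩ := cube_disj m m' hm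
    rw [if_neg h1, if_neg h2, if_neg h3, if_neg h4]
    ring

lemma cube_diag_zero (m : Fin 12) (ε : Fin 2) (p : Fin 3 × Fin 3 × Fin 3)
    (hd : p.2.1 = p.1 ∧ p.2.2 = p.1) : cubeState m ε p = 0 := by
  obtain ⟨h1, h2⟩ := cube_not_diag m p hd
  simp only [cubeState, Pi.add_apply, Pi.smul_apply, smul_eq_mul, ket3, Prod.mk.eta,
    if_neg h1, if_neg h2, mul_zero, add_zero]

lemma cube_ghz_orth (m : Fin 12) (ε : Fin 2) (s : Fin 3) :
    ∑ p : Fin 3 × Fin 3 × Fin 3,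
      (starRingEnd ℂ) (cubeState m ε p) * ghz3 s p = 0 := by
  refine Finset.sum_eq_zero fun p _ => ?_
  by_cases hd : p.2.1 = p.1 ∧ p.2.2 = p.1
  · rw [cube_diag_zero m ε p hd, map_zero, zero_mul]
  · rw [ghz3, if_neg hd, mul_zero]

lemma ghz_cube_orth (m : Fin 12) (ε : Fin 2) (s : Fin 3) :
    ∑ p : Fin 3 × Fin 3 × Fin 3,
      (starRingEnd ℂ) (ghz3 s p) * cubeState m ε p = 0 := by
  refine Finset.sum_eq_zero fun p _ => ?_
  by_cases hd : p.2.1 = p.1 ∧ p.2.2 = p.1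
  · rw [cube_diag_zero m ε p hd, mul_zero]
  · rw [ghz3, if_neg hd, map_zero, zero_mul]

lemma omega_prop : (Complex.exp (2 * Real.pi * Complex.I / 3)) ^ 3 = 1 ∧
    1 + Complex.exp (2 * Real.pi * Complex.I / 3) + (Complex.exp (2 * Real.pi * Complex.I / 3))^2 = 0 ∧
    (starRingEnd ℂ) (Complex.exp (2 * Real.pi * Complex.I / 3)) =
      (Complex.exp (2 * Real.pi * Complex.I / 3))^2 := by
  have hp : IsPrimitiveRoot (Complex.exp (2 * Real.pi * Complex.I / 3)) 3 := by
    have := Complex.isPrimitiveRoot_exp 3 (by norm_num)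
    simpa using this
  set ω := Complex.exp (2 * Real.pi * Complex.I / 3) with hω
  have h3 : ω ^ 3 = 1 := hp.pow_eq_one
  have h1 : ω ≠ 1 := hp.ne_one (by norm_num)
  have hsum : 1 + ω + ω ^ 2 = 0 := by
    have hfac : (ω - 1) * (1 + ω + ω ^ 2) = 0 := by linear_combination h3
    rcases mul_eq_zero.mp hfac with h | h
    · exact absurd (sub_eq_zero.mp h) h1
    · exact h
  refine ⟨h3, hsum, ?_⟩
  have e1 : (starRingEnd ℂ) ω = Complex.exp (-(2 * Real.pi * Complex.I / 3)) := by
    rw [hω, ← Complex.exp_conj]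
    congr 1
    simp [map_div₀, Complex.conj_I, map_ofNat]
    ring
  have e2 : ω ^ 2 = Complex.exp ((2:ℕ) * (2 * Real.pi * Complex.I / 3)) := by
    rw [hω, Complex.exp_nat_mul]
  rw [e1, e2, Complex.exp_eq_exp_iff_exists_int]
  exact ⟨-1, by push_cast; ring⟩

lemma ghz_orth (s t : Fin 3) (h : s ≠ t) :
    ∑ p : Fin 3 × Fin 3 × Fin 3, (starRingEnd ℂ) (ghz3 s p) * ghz3 t p = 0 := by
  obtain ⟨h3, hsum, hconj⟩ := omega_prop
  set ω := Complex.exp (2 * Real.pi * Complex.I / 3) with hω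
  simp only [ghz3, Fintype.sum_prod_type, Fin.sum_univ_three]
  simp only [show ((0:Fin 3)=(1:Fin 3)) = False by simp, show ((0:Fin 3)=(2:Fin 3)) = False by simp,
    show ((1:Fin 3)=(0:Fin 3)) = False by simp, show ((1:Fin 3)=(2:Fin 3)) = False by simp,
    show ((2:Fin 3)=(0:Fin 3)) = False by simp, show ((2:Fin 3)=(1:Fin 3)) = False by simp]
  simp only [and_true, and_false, false_and, if_true, if_false, eq_self_iff_true, map_zero,
    zero_mul, mul_zero, add_zero, zero_add, if_pos, true_and]
  fin_cases s <;> fin_cases t <;> simp_all <;>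
    first
      | linear_combination hsum + ω * h3
      | linear_combination hsum + (ω + ω^2 + ω^5) * h3
      | linear_combination hsum + (ω + ω^2 + ω^4 + ω^7) * h3

lemma cube_nonzero (m : Fin 12) (ε : Fin 2) : cubeState m ε ≠ 0 := by
  intro h0
  have := congrFun h0 (cubePair m).1
  simp only [cubeState, Pi.add_apply, Pi.smul_apply, smul_eq_mul, ket3, Prod.mk.eta,
    if_pos rfl, if_neg (cube_ne m), mul_zero, add_zero, Pi.zero_apply] at this
  exact one_ne_zero this

lemma ghz_nonzero (s : Fin 3) : ghz3 s ≠ 0 := by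
  intro h0
  have := congrFun h0 ((0 : Fin 3), (0 : Fin 3), (0 : Fin 3))
  simp [ghz3] at this

theorem basis27_orthogonal_basis :
    (∀ k l : Fin 27, k ≠ l →
      ∑ p : Fin 3 × Fin 3 × Fin 3,
        (starRingEnd ℂ) (basis27 k p) * basis27 l p = 0) ∧
    (∀ k : Fin 27, basis27 k ≠ 0) := by
  constructor
  · intro k l hkl
    unfold basis27
    by_cases hk : (k : ℕ) < 24 <;> by_cases hl : (l : ℕ) < 24
    · rw [dif_pos hk, dif_pos hl]
      apply cube_orth
      by_contra hcon
      push_neg at hcon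
      obtain ⟨h1, h2⟩ := hcon
      have e1 : (k : ℕ) / 2 = (l : ℕ) / 2 := congrArg Fin.val h1
      have e2 : (k : ℕ) % 2 = (l : ℕ) % 2 := congrArg Fin.val h2
      exact hkl (Fin.ext (by omega))
    · rw [dif_pos hk, dif_neg hl]
      apply cube_ghz_orth
    · rw [dif_neg hk, dif_pos hl]
      apply ghz_cube_orth
    · rw [dif_neg hk, dif_neg hl]
      apply ghz_orth
      intro heq
      have e1 : (k : ℕ) - 24 = (l : ℕ) - 24 := congrArg Fin.val heq
      have hk27 := k.isLt
      have hl27 := l.isLt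
      exact hkl (Fin.ext (by omega))
  · intro k
    unfold basis27
    by_cases hk : (k : ℕ) < 24
    · rw [dif_pos hk]; apply cube_nonzero
    · rw [dif_neg hk]; apply ghz_nonzero
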